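/- arXiv:1301.1873 — 3 statements merged into one kernel-verified Lean document; each statement's English description precedes it below -/
import Mathlib

section
/- For every integer f ≥ 2, every pattern with at most k variables and length at least f·2^(k-1) contains, as a factor, a balanced pattern p' with some number k' ≥ 1 of variables and length at least f·2^(k'-1). -/
/-- A pattern (non-empty word over variables) is doubled if every variable
occurring in it occurs at least twice. -/
def Doubled {V : Type*} [DecidableEq V] (p : List V) : Prop :=
  ∀ x ∈ p, 2 ≤ p.count x

/-- A pattern is balanced if it is doubled and every variable occurs both in
the prefix of length ⌊|p|/2⌋ and in the suffix of length ⌊|p|/2⌋. -/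
def BalancedPattern {V : Type*} [DecidableEq V] (p : List V) : Prop :=
  Doubled p ∧ ∀ x ∈ p, x ∈ p.take (p.length / 2) ∧ x ∈ p.drop (p.length - p.length / 2)

/-!
If every variable of `p` occurs in both halves of `p`, then `p` is balanced. Otherwise some
variable `x` is missing from one half, and that half is a factor of length `⌊|p|/2⌋` with fewer
variables than `p`; since the length bound `f * 2 ^ (k - 1)` halves when `k` drops by one,
induction on the number of variables finishes the proof. The bound `2 ≤ f` keeps the halves
non-empty.
-/

section
variable {V : Type*} [DecidableEq V]

theorem List.two_le_count_of_mem_take_of_mem_drop {p : List V} {x : V} {m j : ℕ} (hmj : m ≤ j)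
    (ht : x ∈ p.take m) (hd : x ∈ p.drop j) : 2 ≤ p.count x := by
  have hd' : x ∈ p.drop m := by
    rw [show j = m + (j - m) by omega, ← List.drop_drop] at hd
    exact List.mem_of_mem_drop hd
  have hsplit : p.count x = (p.take m).count x + (p.drop m).count x := by
    rw [← List.count_append, List.take_append_drop]
  have := List.count_pos_iff.mpr ht
  have := List.count_pos_iff.mpr hd'
  omega

theorem balancedPattern_iff {p : List V} :
    BalancedPattern p ↔
      ∀ x ∈ p, x ∈ p.take (p.length / 2) ∧ x ∈ p.drop (p.length - p.length / 2) :=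
  ⟨And.right, fun h => ⟨fun x hx =>
    List.two_le_count_of_mem_take_of_mem_drop (by omega) (h x hx).1 (h x hx).2, h⟩⟩

theorem List.card_toFinset_lt_of_subset {h p : List V} {x : V} (hsub : h ⊆ p) (hxp : x ∈ p)
    (hxh : x ∉ h) : h.toFinset.card < p.toFinset.card :=
  Finset.card_lt_card <| (Finset.ssubset_iff_of_subset fun _ ha =>
    List.mem_toFinset.mpr (hsub (List.mem_toFinset.mp ha))).mpr
      ⟨x, List.mem_toFinset.mpr hxp, by simpa using hxh⟩

theorem exists_half_infix_card_lt_of_not_balancedPattern {p : List V}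
    (hb : ¬ BalancedPattern p) :
    ∃ h : List V, h <:+: p ∧ h.length = p.length / 2 ∧ h.toFinset.card < p.toFinset.card := by
  rw [balancedPattern_iff] at hb
  push Not at hb
  obtain ⟨x, hxp, hx⟩ := hb
  by_cases ht : x ∈ p.take (p.length / 2)
  · refine ⟨p.drop (p.length - p.length / 2), (List.drop_suffix _ _).isInfix, ?_,
      List.card_toFinset_lt_of_subset (List.drop_sublist _ _).subset hxp (hx ht)⟩
    rw [List.length_drop]
    omega
  · refine ⟨p.take (p.length / 2), (List.take_prefix _ _).isInfix, ?_,
      List.card_toFinset_lt_of_subset (List.take_sublist _ _).subset hxp ht⟩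
    rw [List.length_take]
    omega

end

theorem mul_two_pow_pred_le_half {a m k n : ℕ} (hm : 0 < m) (hmk : m < k)
    (h : a * 2 ^ (k - 1) ≤ n) : a * 2 ^ (m - 1) ≤ n / 2 := by
  rw [Nat.le_div_iff_mul_le two_pos, mul_assoc, ← pow_succ]
  exact (Nat.mul_le_mul_left a (Nat.pow_le_pow_right two_pos (by omega))).trans h

theorem balanced_factor_of_long_pattern_general {V : Type*} [DecidableEq V] (f k : ℕ) (hf : 2 ≤ f)
    (p : List V) (hvars : p.toFinset.card ≤ k)
    (hlen : f * 2 ^ (k - 1) ≤ p.length) :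
    ∃ p' : List V, p'.IsInfix p ∧ p' ≠ [] ∧
      ∃ k' : ℕ, 1 ≤ k' ∧ p'.toFinset.card = k' ∧ f * 2 ^ (k' - 1) ≤ p'.length ∧
        BalancedPattern p' := by
  induction k using Nat.strong_induction_on generalizing p with
  | _ k ih =>
  have hn : 2 ≤ p.length := hf.trans ((Nat.le_mul_of_pos_right f (by positivity)).trans hlen)
  by_cases hb : BalancedPattern p
  · have hp : p ≠ [] := List.ne_nil_of_length_pos (by omega)
    refine ⟨p, List.infix_refl p, hp, _,
      Finset.card_pos.mpr ((List.toFinset_nonempty_iff p).mpr hp), rfl, ?_, hb⟩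
    exact (Nat.mul_le_mul_left f (Nat.pow_le_pow_right two_pos (by omega))).trans hlen
  · obtain ⟨h, hinf, hhalf, hcard⟩ := exists_half_infix_card_lt_of_not_balancedPattern hb
    have hh : 0 < h.toFinset.card := Finset.card_pos.mpr
      ((List.toFinset_nonempty_iff h).mpr (List.ne_nil_of_length_pos (by omega)))
    obtain ⟨q, hq, hrest⟩ := ih _ (by omega) h le_rfl
      (hhalf ▸ mul_two_pow_pred_le_half hh (by omega) hlen)
    exact ⟨q, hq.trans hinf, hrest⟩

theorem balanced_factor_of_long_pattern {V : Type*} [DecidableEq V] (f k : ℕ) (hf : 2 ≤ f)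
    (p : List V) (hp : p ≠ []) (hvars : p.toFinset.card ≤ k)
    (hlen : f * 2 ^ (k - 1) ≤ p.length) :
    ∃ p' : List V, p'.IsInfix p ∧ p' ≠ [] ∧
      ∃ k' : ℕ, 1 ≤ k' ∧ p'.toFinset.card = k' ∧ f * 2 ^ (k' - 1) ≤ p'.length ∧
        BalancedPattern p' :=
  balanced_factor_of_long_pattern_general f k hf p hvars hlen
end

section
/- For every integer f ≥ 2, every pattern with at most k variables and length at least f·2^(k-1) contains, as a factor, a doubled pattern p' with some number k' ≥ 1 of variables and length at least f·2^(k'-1). -/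
namespace List

variable {V : Type*}

theorem length_lt_of_infix_of_notMem {q p : List V} {x : V} (hqp : q <:+: p)
    (hxp : x ∈ p) (hxq : x ∉ q) : q.length < p.length :=
  hqp.length_le.lt_of_ne fun h => hxq (hqp.eq_of_length h ▸ hxp)

variable [DecidableEq V]

theorem exists_eq_append_cons_of_count_eq_one {p : List V} {x : V} (hx : p.count x = 1) :
    ∃ u v, p = u ++ x :: v ∧ x ∉ u ∧ x ∉ v := by
  obtain ⟨u, v, rfl⟩ := append_of_mem (count_pos_iff.mp (by omega : 0 < p.count x))
  simp only [count_append, count_cons_self] at hx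
  exact ⟨u, v, rfl, count_eq_zero.mp (by omega), count_eq_zero.mp (by omega)⟩

theorem card_toFinset_lt_of_subset_of_notMem {q p : List V} {x : V} (hqp : q ⊆ p)
    (hxp : x ∈ p) (hxq : x ∉ q) : q.toFinset.card < p.toFinset.card :=
  Finset.card_lt_card <|
    Finset.ssubset_iff_of_subset (fun _ ha => by simpa using hqp (by simpa using ha)) |>.mpr
      ⟨x, by simpa using hxp, by simpa using hxq⟩

end List

section

open List

variable {V : Type*} [DecidableEq V]

theorem exists_count_eq_one_of_not_doubled {p : List V} (hp : ¬Doubled p) :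
    ∃ x ∈ p, p.count x = 1 := by
  simp only [Doubled, not_forall, not_le] at hp
  obtain ⟨x, hx, hlt⟩ := hp
  exact ⟨x, hx, by have := count_pos_iff.mpr hx; omega⟩

theorem exists_doubled_infix {f : ℕ} (hf : 2 ≤ f) (p : List V)
    (hlen : f * 2 ^ (p.toFinset.card - 1) ≤ p.length) :
    ∃ q, q <:+: p ∧ f * 2 ^ (q.toFinset.card - 1) ≤ q.length ∧ Doubled q := by
  by_cases hd : Doubled p
  · exact ⟨p, infix_refl p, hlen, hd⟩
  obtain ⟨x, -, hx⟩ := exists_count_eq_one_of_not_doubled hd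
  obtain ⟨u, v, rfl, hxu, hxv⟩ := exists_eq_append_cons_of_count_eq_one hx
  set c := (u ++ x :: v).toFinset.card
  have hxp : x ∈ u ++ x :: v := by simp
  have recurse : ∀ w, w <:+: u ++ x :: v → x ∉ w → f * 2 ^ (c - 2) ≤ w.length →
      ∃ q, q <:+: u ++ x :: v ∧ f * 2 ^ (q.toFinset.card - 1) ≤ q.length ∧ Doubled q := by
    intro w hw hxw hwlen
    have hcard := card_toFinset_lt_of_subset_of_notMem hw.subset hxp hxw
    have hw_shorter := length_lt_of_infix_of_notMem hw hxp hxw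
    obtain ⟨q, hq, hqlen, hqd⟩ := exists_doubled_infix hf w <| le_trans
      (Nat.mul_le_mul_left f (Nat.pow_le_pow_right two_pos (by omega))) hwlen
    exact ⟨q, hq.trans hw, hqlen, hqd⟩
  have hc : 2 ≤ c := by
    by_contra! hc
    have hu := card_toFinset_lt_of_subset_of_notMem (subset_append_left u _) hxp hxu
    have hv := card_toFinset_lt_of_subset_of_notMem (by simp : v ⊆ u ++ x :: v) hxp hxv
    obtain rfl : u = [] := toFinset_eq_empty_iff u |>.mp <| Finset.card_eq_zero.mp (by omega)
    obtain rfl : v = [] := toFinset_eq_empty_iff v |>.mp <| Finset.card_eq_zero.mp (by omega)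
    have := Nat.le_mul_of_pos_right f (Nat.two_pow_pos (c - 1))
    simp only [nil_append, length_singleton] at hlen
    omega
  have hsplit : f * 2 ^ (c - 1) = 2 * (f * 2 ^ (c - 2)) := by
    rw [mul_left_comm, ← pow_succ']; congr 2; omega
  have hplen : (u ++ x :: v).length = u.length + v.length + 1 := by simp; omega
  rcases le_or_gt (f * 2 ^ (c - 2)) u.length with hu | hu
  · exact recurse u (prefix_append u _).isInfix hxu hu
  · exact recurse v ⟨u ++ [x], [], by simp⟩ hxv (by omega)
termination_by p.length

end

theorem doubled_factor_of_long_pattern_general {V : Type*} [DecidableEq V] (f k : ℕ) (hf : 2 ≤ f)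
    (p : List V) (hvars : p.toFinset.card ≤ k)
    (hlen : f * 2 ^ (k - 1) ≤ p.length) :
    ∃ p' : List V, p'.IsInfix p ∧ p' ≠ [] ∧
      ∃ k' : ℕ, 1 ≤ k' ∧ p'.toFinset.card = k' ∧ f * 2 ^ (k' - 1) ≤ p'.length ∧
        Doubled p' := by
  obtain ⟨q, hq, hqlen, hqd⟩ := exists_doubled_infix hf p <| le_trans (by gcongr; omega) hlen
  have hq_ne : q ≠ [] :=
    List.ne_nil_of_length_pos <| (Nat.mul_pos (by omega) (Nat.two_pow_pos _)).trans_le hqlen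
  exact ⟨q, hq, hq_ne, _, Finset.card_pos.mpr ((List.toFinset_nonempty_iff q).mpr hq_ne), rfl,
    hqlen, hqd⟩

theorem doubled_factor_of_long_pattern {V : Type*} [DecidableEq V] (f k : ℕ) (hf : 2 ≤ f)
    (p : List V) (hp : p ≠ []) (hvars : p.toFinset.card ≤ k)
    (hlen : f * 2 ^ (k - 1) ≤ p.length) :
    ∃ p' : List V, p'.IsInfix p ∧ p' ≠ [] ∧
      ∃ k' : ℕ, 1 ≤ k' ∧ p'.toFinset.card = k' ∧ f * 2 ^ (k' - 1) ≤ p'.length ∧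
        Doubled p' :=
  doubled_factor_of_long_pattern_general f k hf p hvars hlen
end

section
/- The function ḡ_k(ℓ) = ( (⌊ℓ/2⌋)^(k−1) / (k−1)! )^(1/ℓ) satisfies: for all k ≥ 5 and all ℓ ≥ 3·2^(k−1), ḡ_k(ℓ) ≤ ḡ_k(3·2^(k−1)); moreover ḡ_k(3·2^(k−1)) ≤ ḡ_5(48) for all k ≥ 5, and ḡ_5(48) < 1.21973. -/
open Real

/-- `ḡ_k(ℓ) = ((⌊ℓ/2⌋)^(k-1)/(k-1)!)^(1/ℓ)` for a real argument `ℓ`. -/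
noncomputable def gbar (k : ℕ) (ℓ : ℝ) : ℝ :=
  (((⌊ℓ / 2⌋ : ℤ) : ℝ) ^ (k - 1) / (Nat.factorial (k - 1))) ^ ((1 : ℝ) / ℓ)

open scoped Nat

/-! Put `B = 3·2^(k-2)`, so that `q(k) = 2B`. Up to the floor, `log ḡ_k(2x)` is
`(m log x - log m!) / 2x` with `m = k - 1`, and `x ↦ (m log x - c) / x` decreases as soon as
`m log x - c ≥ m`, i.e. `e^m m! ≤ x^m`; at `x = B` this follows from `m! ≤ m^m` and `e m ≤ 4m ≤ B`.
Passing from `k` to `k + 1` doubles `B`, and `ḡ_{k+1}(q(k+1)) ≤ ḡ_k(q(k))` becomes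
`2^(m+1) m! ≤ (m+1) B^(m-1)`, again a consequence of `m! ≤ m^m` and `4m ≤ B`. -/

lemma four_mul_le_three_mul_two_pow (n : ℕ) : 4 * (n + 4) ≤ 3 * 2 ^ (n + 3) := by
  have := n.lt_two_pow_self
  rw [pow_add]
  omega

lemma two_pow_mul_factorial_le {m B : ℕ} (hm : 3 ≤ m) (hB : 4 * m ≤ B) :
    2 ^ (m + 1) * m ! ≤ (m + 1) * B ^ (m - 1) := by
  obtain ⟨j, rfl⟩ : ∃ j, m = j + 1 := ⟨m - 1, by omega⟩
  simp only [Nat.add_sub_cancel]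
  have h2 : 2 ^ (j + 1 + 1) ≤ 4 ^ j :=
    calc 2 ^ (j + 1 + 1) ≤ 2 ^ (2 * j) := Nat.pow_le_pow_right two_pos (by omega)
      _ = 4 ^ j := by rw [pow_mul]; norm_num
  calc 2 ^ (j + 1 + 1) * (j + 1)! ≤ 4 ^ j * ((j + 1) ^ j * (j + 1)) :=
        Nat.mul_le_mul h2 ((Nat.factorial_le_pow _).trans_eq (pow_succ _ _))
    _ = (4 * (j + 1)) ^ j * (j + 1) := by rw [mul_pow]; ring
    _ ≤ B ^ j * (j + 1 + 1) := by gcongr; omega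
    _ = (j + 1 + 1) * B ^ j := mul_comm _ _

lemma two_mul_pow_mul_factorial_sq_le {m B : ℕ} (hm : 3 ≤ m) (hB : 4 * m ≤ B) :
    (2 * B) ^ (m + 1) * m ! ^ 2 ≤ (B ^ m) ^ 2 * (m + 1)! := by
  have hsplit : (B ^ m) ^ 2 = B ^ (m - 1) * B ^ (m + 1) := by
    rw [← pow_mul, ← pow_add]; congr 1; omega
  calc (2 * B) ^ (m + 1) * m ! ^ 2 = 2 ^ (m + 1) * m ! * (B ^ (m + 1) * m !) := by ring
    _ ≤ (m + 1) * B ^ (m - 1) * (B ^ (m + 1) * m !) :=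
        Nat.mul_le_mul_right _ (two_pow_mul_factorial_le hm hB)
    _ = (B ^ m) ^ 2 * (m + 1)! := by rw [hsplit, Nat.factorial_succ]; ring

lemma exp_mul_factorial_le {m B : ℕ} (hB : 4 * m ≤ B) : exp m * m ! ≤ (B : ℝ) ^ m := by
  have he : exp 1 ≤ 4 := exp_one_lt_d9.le.trans (by norm_num)
  calc exp m * m ! ≤ exp 1 ^ m * (m : ℝ) ^ m := by
        rw [exp_one_pow]; gcongr; exact_mod_cast Nat.factorial_le_pow m
    _ = (exp 1 * m) ^ m := (mul_pow _ _ _).symm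
    _ ≤ (B : ℝ) ^ m := by
        gcongr
        calc exp 1 * m ≤ 4 * m := by gcongr
          _ ≤ B := by exact_mod_cast hB

lemma mul_log_sub_div_le {m c B x : ℝ} (hm : 0 ≤ m) (hB : 0 < B) (hBx : B ≤ x)
    (hc : m ≤ m * log B - c) : (m * log x - c) / x ≤ (m * log B - c) / B := by
  have hx : 0 < x := hB.trans_le hBx
  have hlog : B * (log x - log B) ≤ x - B := by
    have := log_le_sub_one_of_pos (div_pos hx hB)
    rw [log_div hx.ne' hB.ne', le_sub_iff_add_le, le_div_iff₀ hB] at this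
    linarith
  rw [div_le_div_iff₀ hx hB]
  nlinarith [mul_le_mul_of_nonneg_left hlog hm, mul_le_mul_of_nonneg_right hc (sub_nonneg.2 hBx)]

lemma pow_div_rpow_one_div_mul_le {m : ℕ} {c s B x : ℝ} (hc : 0 < c) (hs : 0 < s) (hB : 0 < B)
    (hBx : B ≤ x) (hcB : exp m * c ≤ B ^ m) :
    (x ^ m / c) ^ (1 / (s * x)) ≤ (B ^ m / c) ^ (1 / (s * B)) := by
  have hx : 0 < x := hB.trans_le hBx
  have hcond : (m : ℝ) ≤ m * log B - log c := by
    have := log_le_log (by positivity) hcB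
    rw [log_mul (exp_pos _).ne' hc.ne', log_exp, log_pow] at this
    linarith
  rw [rpow_def_of_pos (by positivity), rpow_def_of_pos (by positivity), exp_le_exp,
    log_div (by positivity) hc.ne', log_div (by positivity) hc.ne', log_pow, log_pow]
  calc (m * log x - log c) * (1 / (s * x)) = (m * log x - log c) / x / s := by ring
    _ ≤ (m * log B - log c) / B / s :=
        div_le_div_of_nonneg_right (mul_log_sub_div_le m.cast_nonneg hB hBx hcond) hs.le
    _ = (m * log B - log c) * (1 / (s * B)) := by ring

lemma rpow_one_div_two_mul_le {x y s : ℝ} (hx : 0 ≤ x) (hy : 0 ≤ y) (hs : 0 ≤ s)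
    (h : x ≤ y ^ 2) : x ^ (1 / (2 * s)) ≤ y ^ (1 / s) :=
  calc x ^ (1 / (2 * s)) ≤ (y ^ 2) ^ (1 / (2 * s)) := rpow_le_rpow hx h (by positivity)
    _ = y ^ (1 / s) := by
        rw [← rpow_natCast, ← rpow_mul hy]; push_cast; ring_nf

lemma gbar_two_mul_natCast (k b : ℕ) :
    gbar k (2 * b) = ((b : ℝ) ^ (k - 1) / (k - 1)!) ^ (1 / (2 * (b : ℝ))) := by
  rw [gbar, mul_div_cancel_left₀ _ two_ne_zero, Int.floor_natCast, Int.cast_natCast]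

lemma gbar_le_gbar_two_mul {m B : ℕ} {ℓ : ℝ} (hB : 0 < B) (hcB : exp m * m ! ≤ (B : ℝ) ^ m)
    (hℓ : 2 * (B : ℝ) ≤ ℓ) : gbar (m + 1) ℓ ≤ gbar (m + 1) (2 * B) := by
  have hB' : (0 : ℝ) < B := by exact_mod_cast hB
  have hBℓ : (B : ℝ) ≤ ℓ / 2 := by linarith
  have hb : (0 : ℝ) ≤ ⌊ℓ / 2⌋ := Int.cast_nonneg (Int.floor_nonneg.2 (hB'.le.trans hBℓ))
  rw [gbar_two_mul_natCast, gbar, Nat.add_sub_cancel]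
  calc ((⌊ℓ / 2⌋ : ℝ) ^ m / m !) ^ (1 / ℓ) ≤ ((ℓ / 2) ^ m / m !) ^ (1 / (2 * (ℓ / 2))) := by
        rw [mul_div_cancel₀ _ two_ne_zero]
        refine rpow_le_rpow (div_nonneg (pow_nonneg hb _) (by positivity)) ?_
          (one_div_nonneg.2 (by linarith))
        gcongr
        exact Int.floor_le _
    _ ≤ _ := pow_div_rpow_one_div_mul_le (by positivity) two_pos hB' hBℓ hcB

lemma gbar_succ_le {m B : ℕ} (hm : 3 ≤ m) (hB : 4 * m ≤ B) :
    gbar (m + 2) (2 * ((2 * B : ℕ) : ℝ)) ≤ gbar (m + 1) (2 * B) := by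
  rw [gbar_two_mul_natCast, gbar_two_mul_natCast, Nat.add_sub_cancel,
    show m + 2 - 1 = m + 1 by omega]
  push_cast
  refine rpow_one_div_two_mul_le (by positivity) (by positivity) (by positivity) ?_
  rw [div_pow, div_le_div_iff₀ (by positivity) (by positivity)]
  exact_mod_cast two_mul_pow_mul_factorial_sq_le hm hB

lemma gbar_five_forty_eight_lt : gbar 5 48 < 1.21973 := by
  rw [show (48 : ℝ) = 2 * (24 : ℕ) by norm_num, gbar_two_mul_natCast]
  norm_num [Nat.factorial]
  rw [one_div, rpow_inv_lt_iff_of_pos (by norm_num) (by norm_num) (by norm_num)]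
  norm_num

theorem gbar_bounds :
    (∀ k : ℕ, 5 ≤ k → ∀ ℓ : ℝ, (3 * 2 ^ (k - 1) : ℕ) ≤ ℓ →
      gbar k ℓ ≤ gbar k (3 * 2 ^ (k - 1) : ℕ)) ∧
    (∀ k : ℕ, 5 ≤ k → gbar k (3 * 2 ^ (k - 1) : ℕ) ≤ gbar 5 48) ∧
    gbar 5 48 < 1.21973 := by
  have hq (n : ℕ) : ((3 * 2 ^ (n + 5 - 1) : ℕ) : ℝ) = 2 * ((3 * 2 ^ (n + 3) : ℕ) : ℝ) := by
    push_cast; ring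
  refine ⟨fun k hk ℓ hℓ => ?_, fun k hk => ?_, gbar_five_forty_eight_lt⟩
  · obtain ⟨n, rfl⟩ := Nat.exists_eq_add_of_le' hk
    rw [hq] at hℓ ⊢
    exact gbar_le_gbar_two_mul (by positivity)
      (exp_mul_factorial_le (four_mul_le_three_mul_two_pow n)) hℓ
  · obtain ⟨n, rfl⟩ := Nat.exists_eq_add_of_le' hk
    clear hk
    rw [hq]
    induction n with
    | zero => norm_num
    | succ n ih =>
      calc gbar (n + 1 + 5) (2 * ((3 * 2 ^ (n + 1 + 3) : ℕ) : ℝ))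
          = gbar (n + 4 + 2) (2 * ((2 * (3 * 2 ^ (n + 3)) : ℕ) : ℝ)) := by ring_nf
        _ ≤ gbar (n + 4 + 1) (2 * ((3 * 2 ^ (n + 3) : ℕ) : ℝ)) :=
            gbar_succ_le (by omega) (four_mul_le_three_mul_two_pow n)
        _ ≤ gbar 5 48 := ih
end
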